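/- arXiv:1404.4041 — 9 statements merged into one kernel-verified Lean document; each statement's English description precedes it below -/
import Mathlib

section
/- Let u₀ : ℝ → ℝ be measurable and locally integrable with u_m ≤ u₀(x) ≤ u_M for all x, let c ∈ ℝ, Δx > 0, Δt > 0, λ = Δt/Δx, and fix x₊ ∈ ℝ with x₋ = x₊ − Δx. Define ū_j = (1/Δx)∫_{x₋}^{x₊} u₀(x) dx, f̌₊ = (c/Δt)∫₀^{Δt} u₀(x₊ − c t) dt, and f̌₋ = (c/Δt)∫₀^{Δt} u₀(x₋ − c t) dt. Then the exact-flux cell-average update satisfies the maximum principle: u_m ≤ ū_j − λ·(f̌₊ − f̌₋) ≤ u_M. -/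
open MeasureTheory intervalIntegral Set
open scoped Interval

theorem Convex.interval_average_mem {E : Type*} [NormedAddCommGroup E] [NormedSpace ℝ E]
    [CompleteSpace E] {f : ℝ → E} {s : Set E} {a b : ℝ} (hs : Convex ℝ s) (hsc : IsClosed s)
    (hab : a ≠ b) (hf : IntervalIntegrable f volume a b) (hfs : ∀ x ∈ Ι a b, f x ∈ s) :
    ⨍ x in a..b, f x ∈ s :=
  hs.set_average_mem hsc (by simpa [Real.volume_uIoc, sub_eq_zero] using hab.symm)
    (by simp [Real.volume_uIoc]) ((ae_restrict_iff' measurableSet_uIoc).2 (.of_forall hfs))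
    hf.def'

theorem exact_flux_update_maximum_principle_general
    (u₀ : ℝ → ℝ) (hu : MeasureTheory.LocallyIntegrable u₀)
    (u_m u_M : ℝ) (hbound : ∀ x, u_m ≤ u₀ x ∧ u₀ x ≤ u_M)
    (c Δx Δt lam xp xm : ℝ) (hΔx : 0 < Δx) (hΔt : 0 < Δt)
    (hlam : lam = Δt / Δx) (hx : xm = xp - Δx)
    (ubar : ℝ) (hubar : ubar = (1 / Δx) * ∫ x in xm..xp, u₀ x)
    (fp fm : ℝ)
    (hfp : fp = (c / Δt) * ∫ t in (0:ℝ)..Δt, u₀ (xp - c * t))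
    (hfm : fm = (c / Δt) * ∫ t in (0:ℝ)..Δt, u₀ (xm - c * t)) :
    u_m ≤ ubar - lam * (fp - fm) ∧ ubar - lam * (fp - fm) ≤ u_M := by
  have hint (a b : ℝ) : IntervalIntegrable u₀ volume a b :=
    (hu.integrableOn_isCompact isCompact_uIcc).intervalIntegrable
  have hflux (y : ℝ) : lam * ((c / Δt) * ∫ t in (0:ℝ)..Δt, u₀ (y - c * t)) =
      Δx⁻¹ * ∫ s in (y - c * Δt)..y, u₀ s := by
    calc lam * ((c / Δt) * ∫ t in (0:ℝ)..Δt, u₀ (y - c * t))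
        = Δx⁻¹ * (c • ∫ t in (0:ℝ)..Δt, u₀ (y - c * t)) := by
          rw [hlam, smul_eq_mul]
          field_simp
      _ = Δx⁻¹ * ∫ s in (y - c * Δt)..y, u₀ s := by
          rw [smul_integral_comp_sub_mul, mul_zero, sub_zero]
  have hshift : ∫ s in (xm - c * Δt)..(xp - c * Δt), u₀ s =
      (∫ s in xm..xp, u₀ s) - ((∫ s in (xp - c * Δt)..xp, u₀ s) -
        ∫ s in (xm - c * Δt)..xm, u₀ s) := by
    rw [← integral_interval_sub_interval_comm' (hint _ _) (hint _ _) (hint _ _), sub_sub_cancel]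
  -- the exact update is the cell average of `u₀` over the cell shifted back by `c Δt`
  have hupdate : ubar - lam * (fp - fm) = ⨍ s in (xm - c * Δt)..(xp - c * Δt), u₀ s := by
    rw [interval_average_eq, smul_eq_mul, hshift, mul_sub, hfp, hfm, hflux, hflux, hubar, hx]
    ring
  rw [hupdate]
  exact (convex_Icc u_m u_M).interval_average_mem isClosed_Icc (by linarith)
    (hint _ _) fun x _ => hbound x

theorem exact_flux_update_maximum_principle
    (u₀ : ℝ → ℝ) (hmeas : Measurable u₀) (hu : MeasureTheory.LocallyIntegrable u₀)
    (u_m u_M : ℝ) (hbound : ∀ x, u_m ≤ u₀ x ∧ u₀ x ≤ u_M)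
    (c Δx Δt lam xp xm : ℝ) (hΔx : 0 < Δx) (hΔt : 0 < Δt)
    (hlam : lam = Δt / Δx) (hx : xm = xp - Δx)
    (ubar : ℝ) (hubar : ubar = (1 / Δx) * ∫ x in xm..xp, u₀ x)
    (fp fm : ℝ)
    (hfp : fp = (c / Δt) * ∫ t in (0:ℝ)..Δt, u₀ (xp - c * t))
    (hfm : fm = (c / Δt) * ∫ t in (0:ℝ)..Δt, u₀ (xm - c * t)) :
    u_m ≤ ubar - lam * (fp - fm) ∧ ubar - lam * (fp - fm) ≤ u_M :=
  exact_flux_update_maximum_principle_general u₀ hu u_m u_M hbound c Δx Δt lam xp xm hΔx hΔt hlam hx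
    ubar hubar fp fm hfp hfm
end

section
/- Let u₀ : ℝ → ℝ be measurable and locally integrable with u₀(x) ≤ u_M for all x, let c > 0, Δx > 0, Δt > 0, λ = Δt/Δx with c·λ ≤ 1, and fix x₊ ∈ ℝ with x₋ = x₊ − Δx. Define ū_j = (1/Δx)∫_{x₋}^{x₊} u₀(x) dx, ū_{j−1} = (1/Δx)∫_{x₋−Δx}^{x₋} u₀(x) dx, and f̌₊ = (c/Δt)∫₀^{Δt} u₀(x₊ − c t) dt. Then ū_j − λ·(f̌₊ − c·ū_{j−1}) ≤ u_M. (This is Theorem 3.2 of the paper instantiated to the linear flux f(u) = c u with c > 0, where the upwind Godunov flux at the left interface is f(ū_{j−1}) = c·ū_{j−1}.) -/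
/-!
The exact flux through `x₊` over one time step carries out of the cell precisely the mass of
`u₀` on `[x₊ - cΔt, x₊]`. Hence the update is `1 - cλ` times the average of `u₀` over
`[x₋, x₊ - cΔt]` plus `cλ` times `ū_{j-1}`: a convex combination by the CFL condition, of two
averages each bounded by `u_M`.
-/

open MeasureTheory intervalIntegral

theorem MeasureTheory.LocallyIntegrable.intervalIntegrable {E : Type*} [NormedAddCommGroup E]
    {f : ℝ → E} {μ : Measure ℝ} (hf : LocallyIntegrable f μ) (a b : ℝ) :
    IntervalIntegrable f μ a b :=
  (hf.integrableOn_isCompact isCompact_uIcc).intervalIntegrable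

theorem intervalIntegral.integral_le_sub_mul_of_le {f : ℝ → ℝ} {a b M : ℝ} (hab : a ≤ b)
    (hf : IntervalIntegrable f volume a b) (hM : ∀ x ∈ Set.Icc a b, f x ≤ M) :
    ∫ x in a..b, f x ≤ (b - a) * M := by
  simpa using integral_mono_on hab hf intervalIntegrable_const hM

theorem godunov_limited_update_max_pos_speed_general
    (u₀ : ℝ → ℝ) (hu : MeasureTheory.LocallyIntegrable u₀)
    (u_M : ℝ) (hbound : ∀ x, u₀ x ≤ u_M)
    (c Δx Δt lam xp xm : ℝ) (hc : 0 < c) (hΔx : 0 < Δx) (hΔt : 0 < Δt)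
    (hlam : lam = Δt / Δx) (hcfl : c * lam ≤ 1) (hx : xm = xp - Δx)
    (ubar ubarm : ℝ)
    (hubar : ubar = (1 / Δx) * ∫ x in xm..xp, u₀ x)
    (hubarm : ubarm = (1 / Δx) * ∫ x in (xm - Δx)..xm, u₀ x)
    (fp : ℝ)
    (hfp : fp = (c / Δt) * ∫ t in (0:ℝ)..Δt, u₀ (xp - c * t)) :
    ubar - lam * (fp - c * ubarm) ≤ u_M := by
  subst hlam hx hubar hubarm hfp
  have hcΔt : c * Δt ≤ Δx := by rwa [mul_div_assoc', div_le_one hΔx] at hcfl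
  have hfoot : xp - Δx ≤ xp - c * Δt := by linarith
  have hflux : c / Δt * ∫ t in (0 : ℝ)..Δt, u₀ (xp - c * t)
      = (∫ y in xp - c * Δt..xp, u₀ y) / Δt := by
    rw [div_mul_eq_mul_div, ← smul_eq_mul, smul_integral_comp_sub_mul, mul_zero, sub_zero]
  rw [hflux, ← integral_add_adjacent_intervals (hu.intervalIntegrable (xp - Δx) (xp - c * Δt))
    (hu.intervalIntegrable _ xp)]
  have hstay := integral_le_sub_mul_of_le hfoot (hu.intervalIntegrable _ _) fun x _ ↦ hbound x
  have hinflow := integral_le_sub_mul_of_le (by linarith : xp - Δx - Δx ≤ xp - Δx)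
    (hu.intervalIntegrable _ _) fun x _ ↦ hbound x
  calc _ = (∫ x in xp - Δx..xp - c * Δt, u₀ x) / Δx
        + c * Δt / Δx * ((∫ x in xp - Δx - Δx..xp - Δx, u₀ x) / Δx) := by
          field_simp; ring
    _ ≤ (xp - c * Δt - (xp - Δx)) * u_M / Δx
        + c * Δt / Δx * ((xp - Δx - (xp - Δx - Δx)) * u_M / Δx) := by gcongr
    _ = u_M := by field_simp; ring

theorem godunov_limited_update_max_pos_speed
    (u₀ : ℝ → ℝ) (hmeas : Measurable u₀) (hu : MeasureTheory.LocallyIntegrable u₀)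
    (u_M : ℝ) (hbound : ∀ x, u₀ x ≤ u_M)
    (c Δx Δt lam xp xm : ℝ) (hc : 0 < c) (hΔx : 0 < Δx) (hΔt : 0 < Δt)
    (hlam : lam = Δt / Δx) (hcfl : c * lam ≤ 1) (hx : xm = xp - Δx)
    (ubar ubarm : ℝ)
    (hubar : ubar = (1 / Δx) * ∫ x in xm..xp, u₀ x)
    (hubarm : ubarm = (1 / Δx) * ∫ x in (xm - Δx)..xm, u₀ x)
    (fp : ℝ)
    (hfp : fp = (c / Δt) * ∫ t in (0:ℝ)..Δt, u₀ (xp - c * t)) :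
    ubar - lam * (fp - c * ubarm) ≤ u_M :=
  godunov_limited_update_max_pos_speed_general u₀ hu u_M hbound c Δx Δt lam xp xm hc hΔx hΔt hlam
    hcfl hx ubar ubarm hubar hubarm fp hfp
end

section
/- Let u₀ : ℝ → ℝ be measurable and locally integrable with u₀(x) ≥ u_m for all x, let c > 0, Δx > 0, Δt > 0, λ = Δt/Δx with c·λ ≤ 1, and fix x₊ ∈ ℝ with x₋ = x₊ − Δx. Define ū_j = (1/Δx)∫_{x₋}^{x₊} u₀(x) dx, ū_{j−1} = (1/Δx)∫_{x₋−Δx}^{x₋} u₀(x) dx, and f̌₊ = (c/Δt)∫₀^{Δt} u₀(x₊ − c t) dt. Then ū_j − λ·(f̌₊ − c·ū_{j−1}) ≥ u_m. (This is the minimum-value analogue of Theorem 3.2 for the linear flux f(u) = c u with c > 0.) -/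
open MeasureTheory intervalIntegral

theorem godunov_limited_update_min_pos_speed
    (u₀ : ℝ → ℝ) (hmeas : Measurable u₀) (hu : MeasureTheory.LocallyIntegrable u₀)
    (u_m : ℝ) (hbound : ∀ x, u_m ≤ u₀ x)
    (c Δx Δt lam xp xm : ℝ) (hc : 0 < c) (hΔx : 0 < Δx) (hΔt : 0 < Δt)
    (hlam : lam = Δt / Δx) (hcfl : c * lam ≤ 1) (hx : xm = xp - Δx)
    (ubar ubarm : ℝ)
    (hubar : ubar = (1 / Δx) * ∫ x in xm..xp, u₀ x)
    (hubarm : ubarm = (1 / Δx) * ∫ x in (xm - Δx)..xm, u₀ x)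
    (fp : ℝ)
    (hfp : fp = (c / Δt) * ∫ t in (0:ℝ)..Δt, u₀ (xp - c * t)) :
    u_m ≤ ubar - lam * (fp - c * ubarm) := by
  -- interval integrability on any interval
  have hII : ∀ p q : ℝ, IntervalIntegrable u₀ MeasureTheory.volume p q := by
    intro p q
    exact (hu.integrableOn_isCompact isCompact_uIcc).intervalIntegrable
  -- lower bound for integrals over intervals
  have hLB : ∀ p q : ℝ, p ≤ q → u_m * (q - p) ≤ ∫ x in p..q, u₀ x := by
    intro p q hpq
    have := intervalIntegral.integral_mono_on hpq (_root_.intervalIntegrable_const (c := u_m)) (hII p q)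
      (fun x _ => hbound x)
    simpa [intervalIntegral.integral_const, smul_eq_mul, mul_comm] using this
  have hcΔt : c * Δt ≤ Δx := by
    rw [hlam] at hcfl
    have := (div_le_one hΔx).mp (by linarith [hcfl, mul_div_assoc c Δt Δx] : c * Δt / Δx ≤ 1)
    · exact this
  set a := xp - c * Δt with ha
  have hxa : xm ≤ a := by rw [hx, ha]; linarith
  have haxp : a ≤ xp := by rw [ha]; nlinarith
  -- change of variables in the flux integral
  have hfp2 : fp = (1 / Δt) * ∫ x in a..xp, u₀ x := by
    rw [hfp, intervalIntegral.integral_comp_sub_mul u₀ hc.ne' xp]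
    simp only [mul_zero, sub_zero, smul_eq_mul, ha]
    field_simp
  -- split the cell integral
  have hsplit : (∫ x in xm..xp, u₀ x) = (∫ x in xm..a, u₀ x) + ∫ x in a..xp, u₀ x := by
    rw [intervalIntegral.integral_add_adjacent_intervals (hII xm a) (hII a xp)]
  have h1 : u_m * (a - xm) ≤ ∫ x in xm..a, u₀ x := hLB xm a hxa
  have h3 : u_m * Δx ≤ ∫ x in (xm - Δx)..xm, u₀ x := by
    have := hLB (xm - Δx) xm (by linarith)
    simpa using this
  have hax : a - xm = Δx - c * Δt := by rw [ha, hx]; ring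
  rw [hubar, hubarm, hfp2, hsplit, hlam]
  rw [hax] at h1
  have hΔx' : Δx ≠ 0 := hΔx.ne'
  have hΔt' : Δt ≠ 0 := hΔt.ne'
  have key : ubar - lam * (fp - c * ubarm) = ubar - lam * (fp - c * ubarm) := rfl
  have expand : (1 / Δx) * ((∫ x in xm..a, u₀ x) + ∫ x in a..xp, u₀ x)
      - Δt / Δx * ((1 / Δt) * (∫ x in a..xp, u₀ x) - c * ((1 / Δx) * ∫ x in (xm - Δx)..xm, u₀ x))
      = (1 / Δx) * (∫ x in xm..a, u₀ x) + (c * Δt / (Δx * Δx)) * ∫ x in (xm - Δx)..xm, u₀ x := by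
    field_simp
    ring
  rw [expand]
  have hcd : 0 < c * Δt := mul_pos hc hΔt
  have t1 : (1 / Δx) * (u_m * (Δx - c * Δt)) ≤ (1 / Δx) * (∫ x in xm..a, u₀ x) := by
    apply mul_le_mul_of_nonneg_left h1 (by positivity)
  have t2 : (c * Δt / (Δx * Δx)) * (u_m * Δx) ≤ (c * Δt / (Δx * Δx)) * ∫ x in (xm - Δx)..xm, u₀ x := by
    apply mul_le_mul_of_nonneg_left h3 (by positivity)
  have eq1 : (1 / Δx) * (u_m * (Δx - c * Δt)) + (c * Δt / (Δx * Δx)) * (u_m * Δx) = u_m := by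
    field_simp
    ring
  linarith
end

section
/- Let u₀ : ℝ → ℝ be measurable and locally integrable with u₀(x) ≥ u_m for all x, let c < 0, Δx > 0, Δt > 0, λ = Δt/Δx with |c|·λ ≤ 1, and fix x₊ ∈ ℝ with x₋ = x₊ − Δx. Define ū_j = (1/Δx)∫_{x₋}^{x₊} u₀(x) dx and f̌₊ = (c/Δt)∫₀^{Δt} u₀(x₊ − c t) dt. Then ū_j − λ·(f̌₊ − c·ū_j) ≥ u_m. (This is the minimum-value analogue of Theorem 3.3 for the linear flux f(u) = c u with c < 0.) -/
open MeasureTheory intervalIntegral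

/-!
Both cell average and flux are averages of `u₀`: `ū_j` over the cell `[x₋, x₊]`, and `f̌₊ / c`
over the upwind segment `[x₊, x₊ - cΔt]` swept by the characteristics through `x₊`. The update
`ū_j - λ(f̌₊ - cū_j) = (1 + λc) ū_j + (-λc) (f̌₊ / c)` is therefore a convex combination of two
quantities bounded below by `u_m`, the weights being nonnegative exactly under the CFL condition.
-/

theorem le_interval_average {f : ℝ → ℝ} {a b m : ℝ} (hab : a < b)
    (hf : IntervalIntegrable f volume a b) (hm : ∀ x ∈ Set.Icc a b, m ≤ f x) :
    m ≤ ⨍ x in a..b, f x := by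
  rw [interval_average_eq_div, le_div_iff₀ (sub_pos.2 hab)]
  simpa [mul_comm] using integral_mono_on hab.le intervalIntegrable_const hf hm

theorem div_mul_integral_comp_sub_mul (f : ℝ → ℝ) (c T x : ℝ) :
    c / T * ∫ t in (0 : ℝ)..T, f (x - c * t) = c * ⨍ y in x..x - c * T, f y := by
  have hsub := smul_integral_comp_sub_mul (f := f) (a := 0) (b := T) c x
  rw [mul_zero, sub_zero, smul_eq_mul] at hsub
  rw [interval_average_eq, smul_eq_mul, integral_symm (b := x), ← hsub, sub_sub_cancel_left]
  rcases eq_or_ne c 0 with rfl | hc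
  · simp
  · rcases eq_or_ne T 0 with rfl | hT
    · simp
    · field_simp

theorem godunov_limited_update_min_neg_speed_general
    (u₀ : ℝ → ℝ) (hu : MeasureTheory.LocallyIntegrable u₀)
    (u_m : ℝ) (hbound : ∀ x, u_m ≤ u₀ x)
    (c Δx Δt lam xp xm : ℝ) (hc : c < 0) (hΔx : 0 < Δx) (hΔt : 0 < Δt)
    (hlam : lam = Δt / Δx) (hcfl : |c| * lam ≤ 1) (hx : xm = xp - Δx)
    (ubar : ℝ)
    (hubar : ubar = (1 / Δx) * ∫ x in xm..xp, u₀ x)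
    (fp : ℝ)
    (hfp : fp = (c / Δt) * ∫ t in (0:ℝ)..Δt, u₀ (xp - c * t)) :
    u_m ≤ ubar - lam * (fp - c * ubar) := by
  have hint (a b : ℝ) : IntervalIntegrable u₀ volume a b :=
    (hu.integrableOn_isCompact isCompact_uIcc).intervalIntegrable
  have hcell : ubar = ⨍ x in xm..xp, u₀ x := by
    rw [hubar, interval_average_eq, smul_eq_mul, hx, sub_sub_cancel, one_div]
  have hflux : fp = c * ⨍ y in xp..xp - c * Δt, u₀ y := hfp ▸ div_mul_integral_comp_sub_mul ..
  have hcell_ge : u_m ≤ ubar :=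
    hcell ▸ le_interval_average (by linarith) (hint _ _) fun x _ => hbound x
  have hupwind_ge : u_m ≤ ⨍ y in xp..xp - c * Δt, u₀ y :=
    le_interval_average (by nlinarith) (hint _ _) fun y _ => hbound y
  have hweight : 0 ≤ 1 + lam * c := by rw [abs_of_neg hc] at hcfl; linarith
  have hweight' : 0 ≤ -(lam * c) :=
    neg_nonneg.2 (mul_nonpos_of_nonneg_of_nonpos (hlam ▸ by positivity) hc.le)
  calc u_m = (1 + lam * c) * u_m + -(lam * c) * u_m := by ring
    _ ≤ (1 + lam * c) * ubar + -(lam * c) * ⨍ y in xp..xp - c * Δt, u₀ y := by gcongr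
    _ = ubar - lam * (fp - c * ubar) := by rw [hflux]; ring

theorem godunov_limited_update_min_neg_speed
    (u₀ : ℝ → ℝ) (hmeas : Measurable u₀) (hu : MeasureTheory.LocallyIntegrable u₀)
    (u_m : ℝ) (hbound : ∀ x, u_m ≤ u₀ x)
    (c Δx Δt lam xp xm : ℝ) (hc : c < 0) (hΔx : 0 < Δx) (hΔt : 0 < Δt)
    (hlam : lam = Δt / Δx) (hcfl : |c| * lam ≤ 1) (hx : xm = xp - Δx)
    (ubar : ℝ)
    (hubar : ubar = (1 / Δx) * ∫ x in xm..xp, u₀ x)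
    (fp : ℝ)
    (hfp : fp = (c / Δt) * ∫ t in (0:ℝ)..Δt, u₀ (xp - c * t)) :
    u_m ≤ ubar - lam * (fp - c * ubar) :=
  godunov_limited_update_min_neg_speed_general u₀ hu u_m hbound c Δx Δt lam xp xm hc hΔx hΔt hlam
    hcfl hx ubar hubar fp hfp
end

section
/- Let u₀ : ℝ → ℝ be measurable and locally integrable with u₀(x) ≤ u_M for all x, let c > 0, Δx > 0, Δt > 0, λ = Δt/Δx with c·λ ≤ 1, and fix x₊ ∈ ℝ with x₋ = x₊ − Δx. Define ū_j = (1/Δx)∫_{x₋}^{x₊} u₀(x) dx, ū_{j−1} = (1/Δx)∫_{x₋−Δx}^{x₋} u₀(x) dx, the upwind first-order fluxes ĥ₊ = c·ū_j and ĥ₋ = c·ū_{j−1}, and the exact time-averaged flux f̌₊ = (c/Δt)∫₀^{Δt} u₀(x₊ − c t) dt. Let Ĥ ∈ ℝ be any high-order numerical flux at x₊, set F = Ĥ − ĥ₊, Γ = u_M − (ū_j − λ·(ĥ₊ − ĥ₋)), and suppose F < 0. Define the limiter θ = min(1, Γ/(−λ·F)) and the limited flux H̃ = θ·Ĥ + (1−θ)·ĥ₊.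 Then |H̃ − Ĥ| ≤ |f̌₊ − Ĥ|; that is, the MPP flux limiter modifies the high-order flux by no more than the deviation of that flux from the exact time-averaged flux. (This is Theorem 3.4 of the paper instantiated to the linear flux f(u) = c u with c > 0, limiter case (b).) -/
open MeasureTheory intervalIntegral

theorem mpp_flux_limiter_modification_bound
    (u₀ : ℝ → ℝ) (hmeas : Measurable u₀) (hu : MeasureTheory.LocallyIntegrable u₀)
    (u_M : ℝ) (hbound : ∀ x, u₀ x ≤ u_M)
    (c Δx Δt lam xp xm : ℝ) (hc : 0 < c) (hΔx : 0 < Δx) (hΔt : 0 < Δt)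
    (hlam : lam = Δt / Δx) (hcfl : c * lam ≤ 1) (hx : xm = xp - Δx)
    (ubar ubarm : ℝ)
    (hubar : ubar = (1 / Δx) * ∫ x in xm..xp, u₀ x)
    (hubarm : ubarm = (1 / Δx) * ∫ x in (xm - Δx)..xm, u₀ x)
    (hp hm : ℝ) (hhp : hp = c * ubar) (hhm : hm = c * ubarm)
    (fp : ℝ)
    (hfp : fp = (c / Δt) * ∫ t in (0:ℝ)..Δt, u₀ (xp - c * t))
    (H F Γ : ℝ) (hF : F = H - hp)
    (hΓ : Γ = u_M - (ubar - lam * (hp - hm)))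
    (hFneg : F < 0)
    (θ Htilde : ℝ) (hθ : θ = min 1 (Γ / (-(lam * F))))
    (hHtilde : Htilde = θ * H + (1 - θ) * hp) :
    |Htilde - H| ≤ |fp - H| := by
  have hInt : ∀ a b : ℝ, IntervalIntegrable u₀ volume a b := fun a b =>
    intervalIntegrable_iff.mpr
      ((hu.integrableOn_isCompact isCompact_uIcc).mono_set Set.Ioc_subset_Icc_self)
  have hlampos : 0 < lam := by rw [hlam]; positivity
  -- integral bound lemma
  have hIb : ∀ a b : ℝ, a ≤ b → (∫ x in a..b, u₀ x) ≤ (b - a) * u_M := by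
    intro a b hab
    calc (∫ x in a..b, u₀ x) ≤ ∫ _ in a..b, u_M :=
          intervalIntegral.integral_mono_on hab (hInt a b)
            (intervalIntegrable_const) (fun x _ => hbound x)
      _ = (b - a) * u_M := by simp [smul_eq_mul]
  -- ubarm ≤ u_M
  have hubarmM : ubarm ≤ u_M := by
    have := hIb (xm - Δx) xm (by linarith)
    rw [hubarm]
    rw [show xm - (xm - Δx) = Δx by ring] at this
    rw [div_mul_eq_mul_div, one_mul, div_le_iff₀ hΔx]
    linarith [this]
  -- rewrite fp as a space integral
  have hcΔt : c * Δt ≤ Δx := by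
    rw [hlam, ← mul_div_assoc] at hcfl
    exact (div_le_one hΔx).mp hcfl
  have hfp' : fp = (1 / Δt) * ∫ x in (xp - c * Δt)..xp, u₀ x := by
    have h1 : (∫ t in (0:ℝ)..Δt, u₀ (xp - c * t))
        = c⁻¹ * ∫ x in (xp - c * Δt)..xp, u₀ x := by
      have := intervalIntegral.integral_comp_mul_left (fun x => u₀ (xp - x)) (ne_of_gt hc)
        (a := (0:ℝ)) (b := Δt)
      rw [this, mul_zero]
      rw [intervalIntegral.integral_comp_sub_left u₀ xp, sub_zero]
      simp [smul_eq_mul]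
    rw [hfp, h1]
    field_simp
  -- split the integral
  have hsplit : (∫ x in xm..xp, u₀ x)
      = (∫ x in xm..(xp - c * Δt), u₀ x) + ∫ x in (xp - c * Δt)..xp, u₀ x :=
    (intervalIntegral.integral_add_adjacent_intervals (hInt _ _) (hInt _ _)).symm
  have hmid : (∫ x in xm..(xp - c * Δt), u₀ x) ≤ (Δx - c * Δt) * u_M := by
    have := hIb xm (xp - c * Δt) (by nlinarith)
    rw [show xp - c * Δt - xm = Δx - c * Δt by rw [hx]; ring] at this
    exact this
  -- key: fp ≥ hm - (u_M - ubar)/lam is equivalent to the final bound; we derive directly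
  have hubar' : Δx * ubar = ∫ x in xm..xp, u₀ x := by
    rw [hubar]; field_simp
  have hkey : hm - (u_M - ubar) / lam ≤ fp := by
    have h2 : (Δx * ubar - (Δx - c * Δt) * u_M) ≤ ∫ x in (xp - c * Δt)..xp, u₀ x := by
      rw [hubar']; linarith [hsplit, hmid]
    have h3 : (1 / Δt) * (Δx * ubar - (Δx - c * Δt) * u_M) ≤ fp := by
      rw [hfp']
      have := mul_le_mul_of_nonneg_left h2 (le_of_lt (by positivity : (0:ℝ) < 1 / Δt))
      linarith
    have hum : ubarm ≤ u_M := hubarmM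
    have e : 1 / Δt * (Δx * ubar - (Δx - c * Δt) * u_M) = (ubar - u_M) / lam + c * u_M := by
      rw [hlam]
      field_simp
      ring
    rw [e] at h3
    have e2 : (u_M - ubar) / lam = -((ubar - u_M) / lam) := by ring
    rw [hhm, e2]
    have := mul_le_mul_of_nonneg_left hum (le_of_lt hc)
    linarith
  -- case analysis on θ
  rcases le_or_gt 1 (Γ / (-(lam * F))) with h1 | h1
  · have : θ = 1 := by rw [hθ, min_eq_left h1]
    rw [hHtilde, this]
    simp
  · have hθv : θ = Γ / (-(lam * F)) := by rw [hθ, min_eq_right h1.le]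
    have hlf : 0 < -(lam * F) := by nlinarith
    have hHt : Htilde - H = (1 - θ) * (hp - H) := by rw [hHtilde]; ring
    have hθ1 : θ ≤ 1 := by rw [hθ]; exact min_le_left _ _
    have habs : |Htilde - H| = (1 - θ) * (-F) := by
      rw [hHt, abs_of_nonneg]
      · rw [hF]; ring
      · nlinarith [hF]
    rw [habs, hθv]
    have hF0 : F ≠ 0 := ne_of_lt hFneg
    have hl0 : lam ≠ 0 := ne_of_gt hlampos
    have hval : (1 - Γ / (-(lam * F))) * (-F) = -F - Γ / lam := by
      field_simp
      ring
    rw [hval]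
    have : -F - Γ / lam ≤ fp - H := by
      rw [hF, hΓ]
      have : (u_M - (ubar - lam * (hp - hm))) / lam = (u_M - ubar) / lam + (hp - hm) := by
        field_simp; ring
      rw [this]
      linarith [hkey]
    calc -F - Γ / lam ≤ fp - H := this
      _ ≤ |fp - H| := le_abs_self _
end

section
/- Let λ > 0 and let F₋, F₊, Γ be real numbers with F₋ > 0, F₊ < 0, and Γ ≥ 0, and set Λ = min(1, Γ/(λ·F₋ − λ·F₊)). Then for every θ₋ ∈ [0, Λ] and every θ₊ ∈ [0, Λ], the inequality λ·θ₋·F₋ − λ·θ₊·F₊ − Γ ≤ 0 holds. (This is case (d) of the decoupling of the maximum-side limiter inequality.) -/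
theorem limiter_case_d_max
    (lam Fm Fp Γ : ℝ) (hlam : 0 < lam)
    (hFm : 0 < Fm) (hFp : Fp < 0) (hΓ : 0 ≤ Γ)
    (Λ : ℝ) (hΛ : Λ = min 1 (Γ / (lam * Fm - lam * Fp)))
    (θm θp : ℝ) (hθm : θm ∈ Set.Icc (0:ℝ) Λ) (hθp : θp ∈ Set.Icc (0:ℝ) Λ) :
    lam * θm * Fm - lam * θp * Fp - Γ ≤ 0 := by
  obtain ⟨hθm0, hθm1⟩ := hθm
  obtain ⟨hθp0, hθp1⟩ := hθp
  have hD : 0 < lam * Fm - lam * Fp := by nlinarith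
  have hΛle : Λ ≤ Γ / (lam * Fm - lam * Fp) := hΛ ▸ min_le_right _ _
  have hΛD : Λ * (lam * Fm - lam * Fp) ≤ Γ := by
    rw [← le_div_iff₀ hD]; exact hΛle
  nlinarith [mul_nonneg hlam.le hFm.le, mul_nonneg hlam.le (neg_pos.mpr hFp).le]
end

section
/- Let λ > 0 and let F₋, F₊, Γ be real numbers with F₋ < 0, F₊ ≥ 0, and Γ ≤ 0, and set Λ = min(1, Γ/(λ·F₋ − λ·F₊)). Then for every θ₋ ∈ [0, Λ] and every θ₊ ∈ [0, Λ], the inequality λ·θ₋·F₋ − λ·θ₊·F₊ − Γ ≥ 0 holds. (This is case (d) of the decoupling of the minimum-side limiter inequality.) -/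
theorem limiter_case_d_min
    (lam Fm Fp Γ : ℝ) (hlam : 0 < lam)
    (hFm : Fm < 0) (hFp : 0 ≤ Fp) (hΓ : Γ ≤ 0)
    (Λ : ℝ) (hΛ : Λ = min 1 (Γ / (lam * Fm - lam * Fp)))
    (θm θp : ℝ) (hθm : θm ∈ Set.Icc (0:ℝ) Λ) (hθp : θp ∈ Set.Icc (0:ℝ) Λ) :
    lam * θm * Fm - lam * θp * Fp - Γ ≥ 0 := by
  obtain ⟨hθm0, hθmΛ⟩ := hθm
  obtain ⟨hθp0, hθpΛ⟩ := hθp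
  set D : ℝ := lam * Fm - lam * Fp with hD
  have hDneg : D < 0 := by
    have : lam * Fm < 0 := mul_neg_of_pos_of_neg hlam hFm
    nlinarith [mul_nonneg hlam.le hFp]
  have hΛle : Λ ≤ Γ / D := by rw [hΛ]; exact min_le_right _ _
  have hΛD : Γ ≤ Λ * D := by
    have := (le_div_iff_of_neg hDneg).mp hΛle
    linarith
  have h1 : lam * Λ * Fm ≤ lam * θm * Fm := by
    have := mul_le_mul_of_nonneg_left hθmΛ hlam.le
    nlinarith
  have h2 : lam * θp * Fp ≤ lam * Λ * Fp := by
    have := mul_le_mul_of_nonneg_left hθpΛ hlam.le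
    nlinarith [mul_nonneg hlam.le hFp]
  nlinarith
end

section
/- Define g₂(z, λ₀) = 1/2 + (−λ₀ + 3λ₀² − 2λ₀³) + 6(−λ₀ + λ₀²)·z + 6z² for real z and λ₀. Then for every λ₀ ∈ [−1,0] and every z ∈ ℝ, g₂(z, λ₀) ≥ 1/2 + (λ₀/2)(λ₀ + 1)(λ₀ − 1)(2 − 3λ₀) ≥ 0; in particular g₂(z, λ₀) ≥ 0, and the first inequality is an equality at z = −(1/2)·λ₀·(λ₀ − 1). -/
noncomputable def g₂ (z l₀ : ℝ) : ℝ :=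
  1/2 + (-l₀ + 3*l₀^2 - 2*l₀^3) + 6*(-l₀ + l₀^2)*z + 6*z^2

theorem g₂_lower_bound (l₀ : ℝ) (hl : l₀ ∈ Set.Icc (-1:ℝ) 0) :
    (∀ z : ℝ, g₂ z l₀ ≥ 1/2 + (l₀/2)*(l₀ + 1)*(l₀ - 1)*(2 - 3*l₀)) ∧
    1/2 + (l₀/2)*(l₀ + 1)*(l₀ - 1)*(2 - 3*l₀) ≥ 0 ∧
    g₂ (-(1/2)*l₀*(l₀ - 1)) l₀ = 1/2 + (l₀/2)*(l₀ + 1)*(l₀ - 1)*(2 - 3*l₀) := by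
  obtain ⟨h1, h2⟩ := hl
  refine ⟨fun z => ?_, ?_, by unfold g₂; ring⟩
  · unfold g₂
    nlinarith [sq_nonneg (z + l₀*(l₀-1)/2)]
  · nlinarith [mul_nonneg (mul_nonneg (neg_nonneg.2 h2) (by linarith : l₀ + 1 ≥ 0)) (by linarith : 1 - l₀ ≥ 0), sq_nonneg l₀, mul_nonneg (neg_nonneg.2 h2) (by linarith : l₀ + 1 ≥ 0)]
end

section
/- Let P : ℝ → ℝ be a polynomial of degree at most 3, let Δx > 0, and let x₀ ∈ ℝ. For k ∈ {0, 1, 2, 3}, define the cell average Āₖ = (1/Δx)∫_{x₀ + (k − 1/2)Δx}^{x₀ + (k + 1/2)Δx} P(x) dx. Then the value at the center of the leftmost cell is recovered exactly by the four-cell reconstruction formula: P(x₀) = (11/12)·Ā₀ + (5/24)·Ā₁ − (1/6)·Ā₂ + (1/24)·Ā₃. -/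
set_option maxHeartbeats 1600000


open intervalIntegral

theorem four_cell_leftmost_reconstruction
    (P : Polynomial ℝ) (hP : P.degree ≤ 3) (Δx x₀ : ℝ) (hΔx : 0 < Δx)
    (A : ℤ → ℝ)
    (hA : ∀ k : ℤ, A k =
      (1 / Δx) * ∫ x in (x₀ + ((k : ℝ) - 1/2) * Δx)..(x₀ + ((k : ℝ) + 1/2) * Δx),
        P.eval x) :
    P.eval x₀ = (11/12) * A 0 + (5/24) * A 1 - (1/6) * A 2 + (1/24) * A 3 := by
  have hnd : P.natDegree < 4 := by
    have h3 : P.natDegree ≤ 3 := Polynomial.natDegree_le_iff_degree_le.mpr hP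
    exact Nat.lt_succ_of_le h3
  have hrep : ∀ x : ℝ, P.eval x =
      P.coeff 0 + P.coeff 1 * x + P.coeff 2 * x ^ 2 + P.coeff 3 * x ^ 3 := by
    intro x
    rw [Polynomial.eval_eq_sum_range' hnd]
    simp [Finset.sum_range_succ]
    try ring
  set c0 := P.coeff 0
  set c1 := P.coeff 1
  set c2 := P.coeff 2
  set c3 := P.coeff 3
  have hderiv : ∀ x : ℝ, HasDerivAt
      (fun x : ℝ => c0 * x + c1 * x ^ 2 / 2 + c2 * x ^ 3 / 3 + c3 * x ^ 4 / 4)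
      (P.eval x) x := by
    intro x
    have h : HasDerivAt
        (fun x : ℝ => c0 * x + c1 * x ^ 2 / 2 + c2 * x ^ 3 / 3 + c3 * x ^ 4 / 4)
        (c0 * 1 + c1 * (2 * x ^ 1) / 2 + c2 * (3 * x ^ 2) / 3 + c3 * (4 * x ^ 3) / 4) x := by
      exact ((((hasDerivAt_id x).const_mul c0).add
        (((hasDerivAt_pow 2 x).const_mul c1).div_const 2)).add
        (((hasDerivAt_pow 3 x).const_mul c2).div_const 3)).add
        (((hasDerivAt_pow 4 x).const_mul c3).div_const 4)
    convert h using 1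
    rw [hrep x]
    ring
  have hint : ∀ a b : ℝ, (∫ x in a..b, P.eval x) =
      (c0 * b + c1 * b ^ 2 / 2 + c2 * b ^ 3 / 3 + c3 * b ^ 4 / 4)
      - (c0 * a + c1 * a ^ 2 / 2 + c2 * a ^ 3 / 3 + c3 * a ^ 4 / 4) := by
    intro a b
    exact intervalIntegral.integral_eq_sub_of_hasDerivAt (fun x _ => hderiv x)
      ((P.continuous_aeval.intervalIntegrable a b))
  rw [hA 0, hA 1, hA 2, hA 3]
  simp only [hint, hrep x₀]
  push_cast
  field_simp
  ring
end
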